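/- Let (L,·) be a central square C-loop with identity e, let a ∈ L with two-sided inverse a⁻¹, set A = L_a, and let (L,∘) be an alternative central square loop such that (A,I,A) is an isotopism of (L,·) onto (L,∘). Let ∗ denote the operation of the f,g-isotope F_{a⁻¹,e}. Then (L,∘) is a C-loop, L_a is an isomorphism of (L,∗) onto (L,∘) (so (L,∗) is also a central square C-loop), and the system {(L,·), (L,∘), (L,∗)} consists of pairwise isotopic central square C-loops satisfying the generalized left distributive law a·(x∗y) = (a·x)∘(a·y) for all x,y ∈ L. -/

import Mathlib

/-- A loop operation on `L` with two-sided identity `e` and bijective translations. -/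
def IsLoopOp {L : Type*} (mul : L → L → L) (e : L) : Prop :=
  (∀ x, mul e x = x) ∧ (∀ x, mul x e = x) ∧
  (∀ a, Function.Bijective (fun x => mul a x)) ∧
  (∀ a, Function.Bijective (fun x => mul x a))

/-- A quasigroup operation: all translations are bijective. -/
def IsQuasigroupOp {L : Type*} (mul : L → L → L) : Prop :=
  (∀ a, Function.Bijective (fun x => mul a x)) ∧
  (∀ a, Function.Bijective (fun x => mul x a))

/-- LC identity: (x·(x·y))·z = x·(x·(y·z)). -/
def LCIdent {L : Type*} (mul : L → L → L) : Prop :=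
  ∀ x y z, mul (mul x (mul x y)) z = mul x (mul x (mul y z))

/-- RC identity: ((y·z)·x)·x = y·((z·x)·x). -/
def RCIdent {L : Type*} (mul : L → L → L) : Prop :=
  ∀ x y z, mul (mul (mul y z) x) x = mul y (mul (mul z x) x)

/-- C identity: ((y·x)·x)·z = y·(x·(x·z)). -/
def CIdent {L : Type*} (mul : L → L → L) : Prop :=
  ∀ x y z, mul (mul (mul y x) x) z = mul y (mul x (mul x z))

/-- Commutativity of a binary operation. -/
def CommOp {L : Type*} (mul : L → L → L) : Prop := ∀ x y, mul x y = mul y x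

/-- `a` lies in the center of `(L, mul)`. -/
def InCenterOp {L : Type*} (mul : L → L → L) (a : L) : Prop :=
  (∀ x, mul a x = mul x a) ∧
  (∀ x y, mul (mul a x) y = mul a (mul x y)) ∧
  (∀ x y, mul (mul x a) y = mul x (mul a y)) ∧
  (∀ x y, mul (mul x y) a = mul x (mul y a))

/-- Central square: every square lies in the center. -/
def CentralSquareOp {L : Type*} (mul : L → L → L) : Prop :=
  ∀ x, InCenterOp mul (mul x x)

/-- Alternative: x·(x·y) = (x·x)·y and (y·x)·x = y·(x·x). -/
def AlternativeOp {L : Type*} (mul : L → L → L) : Prop :=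
  (∀ x y, mul x (mul x y) = mul (mul x x) y) ∧
  (∀ x y, mul (mul y x) x = mul y (mul x x))

/-- Two binary systems on `L` are isotopic. -/
def Isotopic {L : Type*} (m₁ m₂ : L → L → L) : Prop :=
  ∃ A B C : L → L, Function.Bijective A ∧ Function.Bijective B ∧ Function.Bijective C ∧
    ∀ x y, m₂ (A x) (B y) = C (m₁ x y)

/-! In a C-loop, `a'·a = e` already makes `L_{a'}` a left inverse of `L_a`, so `∗ = F_{a⁻¹,e}` is
the isotope `x ∗ y = x·(a·y)`. Then the isotopism `(L_a, I, L_a)` says precisely that `L_a` is a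
homomorphism from `∗` to `∘`. An alternative central square loop is a C-loop, because
`((y∘x)∘x)∘z = (y∘x²)∘z = y∘(x²∘z) = y∘(x∘(x∘z))`; being a C-loop and having central squares then
pass from `∘` back to `∗` along the injective homomorphism `L_a`, and the isotopisms compose. -/

open Function

section Transport

variable {L : Type*} {m₁ m₂ : L → L → L} {φ : L → L}

theorem InCenterOp.of_injective_hom (hφ : Injective φ) (hom : ∀ x y, φ (m₁ x y) = m₂ (φ x) (φ y))
    {c : L} (h : InCenterOp m₂ (φ c)) : InCenterOp m₁ c := by
  obtain ⟨hcomm, hleft, hmid, hright⟩ := h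
  refine ⟨fun x => hφ ?_, fun x y => hφ ?_, fun x y => hφ ?_, fun x y => hφ ?_⟩ <;>
    simp only [hom]
  exacts [hcomm _, hleft _ _, hmid _ _, hright _ _]

theorem CentralSquareOp.of_injective_hom (hφ : Injective φ)
    (hom : ∀ x y, φ (m₁ x y) = m₂ (φ x) (φ y)) (h : CentralSquareOp m₂) : CentralSquareOp m₁ :=
  fun x => .of_injective_hom hφ hom (hom x x ▸ h (φ x))

theorem CIdent.of_injective_hom (hφ : Injective φ) (hom : ∀ x y, φ (m₁ x y) = m₂ (φ x) (φ y))
    (h : CIdent m₂) : CIdent m₁ := fun x y z => hφ (by simp only [hom]; exact h _ _ _)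

end Transport

section Isotopy

variable {L : Type*} {m₁ m₂ m₃ : L → L → L}

theorem Isotopic.of_bijective_hom {φ : L → L} (hφ : Bijective φ)
    (hom : ∀ x y, φ (m₁ x y) = m₂ (φ x) (φ y)) : Isotopic m₁ m₂ :=
  ⟨φ, φ, φ, hφ, hφ, hφ, fun x y => (hom x y).symm⟩

theorem Isotopic.symm (h : Isotopic m₁ m₂) : Isotopic m₂ m₁ := by
  obtain ⟨A, B, C, hA, hB, hC, hiso⟩ := h
  let A' := Equiv.ofBijective A hA
  let B' := Equiv.ofBijective B hB
  let C' := Equiv.ofBijective C hC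
  refine ⟨A'.symm, B'.symm, C'.symm, A'.symm.bijective, B'.symm.bijective, C'.symm.bijective,
    fun x y => ?_⟩
  have h := hiso (A'.symm x) (B'.symm y)
  rw [show A (A'.symm x) = x from A'.apply_symm_apply x,
    show B (B'.symm y) = y from B'.apply_symm_apply y] at h
  exact C'.eq_symm_apply.mpr h.symm

theorem Isotopic.trans (h₁₂ : Isotopic m₁ m₂) (h₂₃ : Isotopic m₂ m₃) : Isotopic m₁ m₃ := by
  obtain ⟨A, B, C, hA, hB, hC, hiso⟩ := h₁₂
  obtain ⟨A', B', C', hA', hB', hC', hiso'⟩ := h₂₃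
  exact ⟨A' ∘ A, B' ∘ B, C' ∘ C, hA'.comp hA, hB'.comp hB, hC'.comp hC,
    fun x y => by simp only [comp_apply, hiso', hiso]⟩

end Isotopy

section Loops

variable {L : Type*} {mul : L → L → L} {e a a' : L}

theorem CIdent.leftInverse_mul_left (hC : CIdent mul) (hle : ∀ x, mul e x = x)
    (hsurj : Surjective (mul a)) (h : mul a' a = e) : LeftInverse (mul a') (mul a) := by
  intro w
  obtain ⟨z, rfl⟩ := hsurj w
  have := hC a a' z
  rwa [h, hle, eq_comm] at this

theorem IsLoopOp.isotope_mul_left (hloop : IsLoopOp mul e) (hright : mul a a' = e)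
    (hleft : LeftInverse (mul a') (mul a)) : IsLoopOp (fun x y => mul x (mul a y)) a' := by
  obtain ⟨-, hre, hlb, hrb⟩ := hloop
  exact ⟨hleft, fun x => by simp only [hright, hre], fun c => (hlb c).comp (hlb a),
    fun c => hrb (mul a c)⟩

theorem CIdent.of_alternativeOp (halt : AlternativeOp mul) (hcs : CentralSquareOp mul) :
    CIdent mul := fun x y z => by
  rw [halt.2 x y, (hcs x).2.2.1 y z, halt.1 x z]

end Loops

theorem stmt9_general {L : Type*} (mul circ star : L → L → L) (e a a' : L)
    (hloop : IsLoopOp mul e) (hC : CIdent mul)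
    (hinv : mul a a' = e ∧ mul a' a = e)
    (halt : AlternativeOp circ) (hcs₂ : CentralSquareOp circ)
    (hiso : ∀ x y, circ (mul a x) y = mul a (mul x y))
    (hstar : ∀ x y, star (mul x e) (mul a' y) = mul x y) :
    CIdent circ ∧
    (Function.Bijective (fun x => mul a x) ∧
      ∀ x y, mul a (star x y) = circ (mul a x) (mul a y)) ∧
    ((∃ e₃, IsLoopOp star e₃) ∧ CIdent star ∧ CentralSquareOp star) ∧
    (Isotopic mul circ ∧ Isotopic mul star ∧ Isotopic circ star) ∧
    (∀ x y, mul a (star x y) = circ (mul a x) (mul a y)) := by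
  have ⟨hle, hre, hlb, _⟩ := hloop
  have hinv_left : LeftInverse (mul a') (mul a) := hC.leftInverse_mul_left hle (hlb a).2 hinv.2
  have star_eq : star = fun x y => mul x (mul a y) := by
    funext x y
    simpa only [hre, hinv_left y] using hstar x (mul a y)
  have hom : ∀ x y, mul a (star x y) = circ (mul a x) (mul a y) := fun x y => by
    rw [hiso, star_eq]
  have hCcirc : CIdent circ := .of_alternativeOp halt hcs₂
  have hmul_circ : Isotopic mul circ := ⟨mul a, id, mul a, hlb a, bijective_id, hlb a, hiso⟩
  have hcirc_star : Isotopic circ star := (Isotopic.of_bijective_hom (hlb a) hom).symm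
  refine ⟨hCcirc, ⟨hlb a, hom⟩, ⟨⟨a', ?_⟩, hCcirc.of_injective_hom (hlb a).1 hom,
    hcs₂.of_injective_hom (hlb a).1 hom⟩, ⟨hmul_circ, hmul_circ.trans hcirc_star, hcirc_star⟩, hom⟩
  rw [star_eq]
  exact hloop.isotope_mul_left hinv.1 hinv_left

/-- Let `(L,·)` be a central square C-loop with identity `e`,
`a ∈ L` with two-sided inverse `a⁻¹`, and let `(L,∘)` be an alternative central
square loop with `(L_a, I, L_a)` an isotopism of `(L,·)` onto `(L,∘)`. With
`∗ = F_{a⁻¹,e}`: `(L,∘)` is a C-loop; `L_a` is an isomorphism of `(L,∗)` onto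
`(L,∘)` (so `(L,∗)` is a central square C-loop); the three loops are pairwise
isotopic central square C-loops, and a·(x∗y) = (a·x)∘(a·y) for all x,y. -/
theorem stmt9 {L : Type*} (mul circ star : L → L → L) (e e₂ a a' : L)
    (hloop : IsLoopOp mul e) (hC : CIdent mul) (hcs : CentralSquareOp mul)
    (hinv : mul a a' = e ∧ mul a' a = e)
    (hloop₂ : IsLoopOp circ e₂) (halt : AlternativeOp circ) (hcs₂ : CentralSquareOp circ)
    (hiso : ∀ x y, circ (mul a x) y = mul a (mul x y))
    (hstar : ∀ x y, star (mul x e) (mul a' y) = mul x y) :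
    CIdent circ ∧
    (Function.Bijective (fun x => mul a x) ∧
      ∀ x y, mul a (star x y) = circ (mul a x) (mul a y)) ∧
    ((∃ e₃, IsLoopOp star e₃) ∧ CIdent star ∧ CentralSquareOp star) ∧
    (Isotopic mul circ ∧ Isotopic mul star ∧ Isotopic circ star) ∧
    (∀ x y, mul a (star x y) = circ (mul a x) (mul a y)) :=
  stmt9_general mul circ star e a a' hloop hC hinv halt hcs₂ hiso hstar
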